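/- Clean detail-energy contraction (special case of the detail-energy bound with vanishing coarse-to-detail coupling): under the setting of the detail-energy control proposition, assume additionally Q_d(M(Q_c z)) = 0 for all z ∈ H and Q_d b = 0. Then E[‖Q_d X'‖₂²] ≤ ρ²·(1−w)²·E[‖Q_d X‖₂²] + σ²·(1−w')²·E[‖Q_d η‖₂²]. -/

import Mathlib

/-!
Because `Q_d` annihilates the coarse part and the coupling and bias have no detail component,
the detail part of the update is `Q_d X' = (1-w)·Q_d M Q_d X + σ(1-w')·Q_d η`. The two summands
are independent and the second is centred, so the cross term vanishes in expectation and the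
detail energy is the sum of the two energies; the first is controlled by the contraction `ρ`.
-/

open scoped BigOperators
open MeasureTheory

namespace Stroke

/-- The space of real `(m·k) × (n·k)` matrices, as functions on index pairs. -/
abbrev H (m n k : ℕ) : Type := Fin (m * k) → Fin (n * k) → ℝ

/-- The grid index `(i/k)·k + r`, i.e. the `r`-th index inside the block containing `i`. -/
def blk (d k : ℕ) (i : Fin (d * k)) (r : Fin k) : Fin (d * k) :=
  ⟨i.val / k * k + r.val, by
    have hk : 0 < k := r.pos
    have h1 : i.val / k < d := (Nat.div_lt_iff_lt_mul hk).mpr i.isLt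
    calc i.val / k * k + r.val < i.val / k * k + k := Nat.add_lt_add_left r.isLt _
      _ = (i.val / k + 1) * k := by ring
      _ ≤ d * k := Nat.mul_le_mul (Nat.succ_le_of_lt h1) le_rfl⟩

/-- The stroke operator `S_k`: average pooling over each `k × k` block followed by
nearest-neighbor upsampling, i.e. every entry of block `B_{p,q}` is replaced by the
block average. -/
noncomputable def S {m n k : ℕ} (x : H m n k) : H m n k :=
  fun i j => (1 / (k : ℝ) ^ 2) *
    ∑ r1 : Fin k, ∑ r2 : Fin k, x (blk m k i r1) (blk n k j r2)

/-- The inner product `⟨x,y⟩ = ∑_{i,j} x[i,j]·y[i,j]` on `H`. -/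
def ip {m n k : ℕ} (x y : H m n k) : ℝ := ∑ i, ∑ j, x i j * y i j

/-- The norm `‖x‖₂ = √⟨x,x⟩` on `H`. -/
noncomputable def norm2 {m n k : ℕ} (x : H m n k) : ℝ := Real.sqrt (ip x x)

/-- The stroke mixing map `A_w = (1-w)·id + w·S_k`. -/
noncomputable def A {m n k : ℕ} (w : ℝ) (x : H m n k) : H m n k :=
  (1 - w) • x + w • S x

/-- The coarse projection `Q_c = S_k`. -/
noncomputable def Qc {m n k : ℕ} (x : H m n k) : H m n k := S x

/-- The detail projection `Q_d = id - S_k`. -/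
noncomputable def Qd {m n k : ℕ} (x : H m n k) : H m n k := x - S x

/-- A matrix is block-constant if it is constant on each block `B_{p,q}`. -/
def BlockConst {m n k : ℕ} (v : H m n k) : Prop :=
  ∀ (i i' : Fin (m * k)) (j j' : Fin (n * k)),
    i.val / k = i'.val / k → j.val / k = j'.val / k → v i j = v i' j'

section IndependentPythagoras

variable {Ω E : Type*} [MeasurableSpace Ω] {μ : Measure Ω} [IsFiniteMeasure μ]
  [NormedAddCommGroup E] [InnerProductSpace ℝ E] [CompleteSpace E]
  [MeasurableSpace E] [BorelSpace E]

theorem integral_norm_add_sq_of_indepFun {U V : Ω → E} (hUV : ProbabilityTheory.IndepFun U V μ)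
    (hU : MemLp U 2 μ) (hV : MemLp V 2 μ) (hV0 : ∫ ω, V ω ∂μ = 0) :
    ∫ ω, ‖U ω + V ω‖ ^ 2 ∂μ = ∫ ω, ‖U ω‖ ^ 2 ∂μ + ∫ ω, ‖V ω‖ ^ 2 ∂μ := by
  have hU1 := hU.integrable one_le_two
  have hV1 := hV.integrable one_le_two
  have hcross : ∫ ω, inner ℝ (U ω) (V ω) ∂μ = 0 :=
    (hUV.integral_bilin hU1 hV1 (innerSL ℝ)).trans (by simp [hV0])
  have hcross1 : Integrable (fun ω => 2 * inner ℝ (U ω) (V ω)) μ :=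
    (hUV.integrable_bilin hU1 hV1 (innerSL ℝ)).const_mul 2
  simp_rw [norm_add_sq_real]
  have hsum : Integrable (fun ω => ‖U ω‖ ^ 2 + 2 * inner ℝ (U ω) (V ω)) μ :=
    hU.integrable_norm_pow'.add hcross1
  rw [integral_add hsum hV.integrable_norm_pow',
    integral_add hU.integrable_norm_pow' hcross1, integral_const_mul, hcross]
  ring

end IndependentPythagoras

section StrokeAlgebra

variable {m n k : ℕ}

lemma blk_div (d : ℕ) (i : Fin (d * k)) (r : Fin k) : (blk d k i r).val / k = i.val / k := by
  change (i.val / k * k + r.val) / k = i.val / k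
  rw [add_comm, Nat.add_mul_div_right _ _ r.pos, Nat.div_eq_of_lt r.isLt, zero_add]

lemma blk_blk (d : ℕ) (i : Fin (d * k)) (r r' : Fin k) : blk d k (blk d k i r) r' = blk d k i r' :=
  Fin.ext <| congrArg (· * k + r'.val) (blk_div d i r)

lemma S_apply_blk (x : H m n k) (i : Fin (m * k)) (j : Fin (n * k)) (r₁ r₂ : Fin k) :
    S x (blk m k i r₁) (blk n k j r₂) = S x i j := by
  simp only [S, blk_blk]

lemma S_idem (x : H m n k) : S (S x) = S x := by
  funext i j
  have hk : (k : ℝ) ≠ 0 := Nat.cast_ne_zero.mpr (Nat.pos_of_mul_pos_left i.pos).ne'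
  change (1 / (k : ℝ) ^ 2) * ∑ r₁ : Fin k, ∑ r₂ : Fin k, S x (blk m k i r₁) (blk n k j r₂) = _
  simp only [S_apply_blk, Finset.sum_const, Finset.card_univ, Fintype.card_fin, nsmul_eq_mul]
  field_simp

noncomputable def Sₗ : H m n k →ₗ[ℝ] H m n k where
  toFun := S
  map_add' x y := by funext i j; simp only [S, Pi.add_apply, Finset.sum_add_distrib, mul_add]
  map_smul' c x := by
    funext i j
    simp only [S, Pi.smul_apply, smul_eq_mul, RingHom.id_apply, ← Finset.mul_sum]
    ring

noncomputable def Qdₗ : H m n k →ₗ[ℝ] H m n k := LinearMap.id - Sₗ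

lemma Sₗ_apply (x : H m n k) : Sₗ x = S x := rfl

lemma Qdₗ_apply (x : H m n k) : Qdₗ x = Qd x := rfl

lemma Qd_add (x y : H m n k) : Qd (x + y) = Qd x + Qd y := map_add Qdₗ x y

lemma Qd_smul (c : ℝ) (x : H m n k) : Qd (c • x) = c • Qd x := map_smul Qdₗ c x

lemma Qd_S (x : H m n k) : Qd (S x) = 0 := by
  rw [Qd, S_idem, sub_self]

lemma S_Qd (x : H m n k) : S (Qd x) = 0 := by
  rw [Qd, ← Sₗ_apply, map_sub, Sₗ_apply, Sₗ_apply, S_idem, sub_self]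

lemma Qd_Qd (x : H m n k) : Qd (Qd x) = Qd x := by
  change Qd x - S (Qd x) = Qd x
  rw [S_Qd, sub_zero]

lemma A_eq_smul_Qd_add_S (w : ℝ) (x : H m n k) : A w x = (1 - w) • Qd x + S x := by
  rw [A, Qd]
  module

lemma Qd_A (w : ℝ) (x : H m n k) : Qd (A w x) = (1 - w) • Qd x := by
  rw [A_eq_smul_Qd_add_S, Qd_add, Qd_smul, Qd_Qd, Qd_S, add_zero]

lemma Qd_update {M : H m n k →ₗ[ℝ] H m n k} {b : H m n k} (hdc : ∀ z, Qd (M (Qc z)) = 0)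
    (hb : Qd b = 0) (σ w w' : ℝ) (x e : H m n k) :
    Qd (M (A w x) + b + σ • A w' e) = (1 - w) • Qd (M (Qd x)) + (σ * (1 - w')) • Qd e := by
  rw [A_eq_smul_Qd_add_S w x, map_add, map_smul, Qd_add, Qd_add, Qd_add, Qd_smul, Qd_smul,
    show Qd (M (S x)) = 0 from hdc x, hb, Qd_A, smul_smul, add_zero, add_zero]

end StrokeAlgebra

section Energy

variable {m n k : ℕ}

/-- The Pi type `H` carries the sup norm; `toEuclidean` transports `norm2` to a Euclidean norm. -/
noncomputable def toEuclidean : H m n k →L[ℝ] EuclideanSpace ℝ (Fin (m * k) × Fin (n * k)) :=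
  LinearMap.toContinuousLinearMap
    { toFun := fun x => WithLp.toLp 2 fun p => x p.1 p.2
      map_add' := fun _ _ => rfl
      map_smul' := fun _ _ => rfl }

lemma toEuclidean_apply (x : H m n k) : toEuclidean x = WithLp.toLp 2 fun p => x p.1 p.2 := rfl

lemma norm2_eq_norm_toEuclidean (x : H m n k) : norm2 x = ‖toEuclidean x‖ := by
  rw [norm2, ip, EuclideanSpace.norm_eq, ← Finset.univ_product_univ, Finset.sum_product]
  simp only [toEuclidean_apply, PiLp.toLp_apply, Real.norm_eq_abs, sq, abs_mul_abs_self]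

lemma norm2_nonneg (x : H m n k) : 0 ≤ norm2 x := Real.sqrt_nonneg _

lemma norm2_smul (c : ℝ) (x : H m n k) : norm2 (c • x) = |c| * norm2 x := by
  rw [norm2_eq_norm_toEuclidean, map_smul, norm_smul, Real.norm_eq_abs,
    norm2_eq_norm_toEuclidean]

variable {Ω : Type*} [MeasurableSpace Ω] {μ : Measure Ω} [IsFiniteMeasure μ]

theorem integral_norm2_add_sq_of_indepFun {U V : Ω → H m n k}
    (hUV : ProbabilityTheory.IndepFun U V μ) (hU : MemLp U 2 μ) (hV : MemLp V 2 μ)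
    (hV0 : ∫ ω, V ω ∂μ = 0) :
    ∫ ω, norm2 (U ω + V ω) ^ 2 ∂μ = ∫ ω, norm2 (U ω) ^ 2 ∂μ + ∫ ω, norm2 (V ω) ^ 2 ∂μ := by
  simp only [norm2_eq_norm_toEuclidean, map_add]
  refine integral_norm_add_sq_of_indepFun
    (hUV.comp toEuclidean.continuous.measurable toEuclidean.continuous.measurable)
    (toEuclidean.comp_memLp' hU) (toEuclidean.comp_memLp' hV) ?_
  rw [toEuclidean.integral_comp_comm (hV.integrable one_le_two), hV0, map_zero]

lemma integrable_norm2_sq {X : Ω → H m n k} (hX : MemLp X 2 μ) :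
    Integrable (fun ω => norm2 (X ω) ^ 2) μ := by
  simp only [norm2_eq_norm_toEuclidean]
  exact (toEuclidean.comp_memLp' hX).integrable_norm_pow'

end Energy

theorem clean_detail_energy_contraction_general {m n k : ℕ}
    {Ω : Type*} [MeasurableSpace Ω] (P : Measure Ω) [IsProbabilityMeasure P]
    (M : H m n k →ₗ[ℝ] H m n k) (b : H m n k) (σ w w' : ℝ)
    (X η : Ω → H m n k) (hX : MemLp X 2 P) (hη : MemLp η 2 P)
    (hindep : ProbabilityTheory.IndepFun η X P)
    (hη0 : ∫ ω, η ω ∂P = 0)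
    (ρ : ℝ)
    (hρ : ∀ z : H m n k, norm2 (Qd (M (Qd z))) ≤ ρ * norm2 (Qd z))
    (hdc : ∀ z : H m n k, Qd (M (Qc z)) = 0)
    (hb : Qd b = 0) :
    ∫ ω, norm2 (Qd (M (A w (X ω)) + b + σ • A w' (η ω))) ^ 2 ∂P
      ≤ ρ ^ 2 * (1 - w) ^ 2 * ∫ ω, norm2 (Qd (X ω)) ^ 2 ∂P
        + σ ^ 2 * (1 - w') ^ 2 * ∫ ω, norm2 (Qd (η ω)) ^ 2 ∂P := by
  let T : H m n k →L[ℝ] H m n k := LinearMap.toContinuousLinearMap ((1 - w) • (Qdₗ ∘ₗ M ∘ₗ Qdₗ))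
  let C : H m n k →L[ℝ] H m n k := LinearMap.toContinuousLinearMap ((σ * (1 - w')) • Qdₗ)
  have hsplit : ∫ ω, norm2 (T (X ω) + C (η ω)) ^ 2 ∂P
      = ∫ ω, norm2 (T (X ω)) ^ 2 ∂P + ∫ ω, norm2 (C (η ω)) ^ 2 ∂P := by
    refine integral_norm2_add_sq_of_indepFun
      (hindep.symm.comp T.continuous.measurable C.continuous.measurable)
      (T.comp_memLp' hX) (C.comp_memLp' hη) ?_
    rw [C.integral_comp_comm (hη.integrable one_le_two), hη0, map_zero]
  have hT : ∀ ω, norm2 (T (X ω)) ^ 2 ≤ ρ ^ 2 * (1 - w) ^ 2 * norm2 (Qd (X ω)) ^ 2 := fun ω => by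
    change norm2 ((1 - w) • Qd (M (Qd (X ω)))) ^ 2 ≤ _
    rw [norm2_smul, mul_pow, sq_abs]
    calc (1 - w) ^ 2 * norm2 (Qd (M (Qd (X ω)))) ^ 2
        ≤ (1 - w) ^ 2 * (ρ * norm2 (Qd (X ω))) ^ 2 := by
          gcongr
          exacts [norm2_nonneg _, hρ _]
      _ = ρ ^ 2 * (1 - w) ^ 2 * norm2 (Qd (X ω)) ^ 2 := by ring
  have hC : ∀ ω, norm2 (C (η ω)) ^ 2 = σ ^ 2 * (1 - w') ^ 2 * norm2 (Qd (η ω)) ^ 2 := fun ω => by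
    change norm2 ((σ * (1 - w')) • Qd (η ω)) ^ 2 = _
    rw [norm2_smul, mul_pow, sq_abs, mul_pow]
  simp only [Qd_update hdc hb]
  change ∫ ω, norm2 (T (X ω) + C (η ω)) ^ 2 ∂P ≤ _
  rw [hsplit, funext hC, integral_const_mul]
  gcongr ?_ + _
  rw [← integral_const_mul]
  exact integral_mono_of_nonneg (.of_forall fun ω => sq_nonneg _)
    ((integrable_norm2_sq ((LinearMap.toContinuousLinearMap Qdₗ).comp_memLp' hX)).const_mul _)
    (.of_forall hT)

/-- clean detail-energy contraction: under the setting of the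
detail-energy control proposition, if additionally `Q_d(M(Q_c z)) = 0` for all `z`
and `Q_d b = 0`, then
`E[‖Q_d X'‖₂²] ≤ ρ²(1−w)²·E[‖Q_d X‖₂²] + σ²(1−w')²·E[‖Q_d η‖₂²]`. -/
theorem clean_detail_energy_contraction {m n k : ℕ}
    (hm : 0 < m) (hn : 0 < n) (hk : 0 < k)
    {Ω : Type*} [MeasurableSpace Ω] (P : Measure Ω) [IsProbabilityMeasure P]
    (M : H m n k →ₗ[ℝ] H m n k) (b : H m n k) (σ w w' : ℝ)
    (hσ : 0 ≤ σ) (hw0 : 0 ≤ w) (hw1 : w ≤ 1) (hw'0 : 0 ≤ w') (hw'1 : w' ≤ 1)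
    (X η : Ω → H m n k) (hX : MemLp X 2 P) (hη : MemLp η 2 P)
    (hindep : ProbabilityTheory.IndepFun η X P)
    (hη0 : ∫ ω, η ω ∂P = 0)
    (ρ : ℝ)
    (hρ : ∀ z : H m n k, norm2 (Qd (M (Qd z))) ≤ ρ * norm2 (Qd z))
    (hdc : ∀ z : H m n k, Qd (M (Qc z)) = 0)
    (hb : Qd b = 0) :
    ∫ ω, norm2 (Qd (M (A w (X ω)) + b + σ • A w' (η ω))) ^ 2 ∂P
      ≤ ρ ^ 2 * (1 - w) ^ 2 * ∫ ω, norm2 (Qd (X ω)) ^ 2 ∂P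
        + σ ^ 2 * (1 - w') ^ 2 * ∫ ω, norm2 (Qd (η ω)) ^ 2 ∂P :=
  clean_detail_energy_contraction_general P M b σ w w' X η hX hη hindep hη0 ρ hρ hdc hb

end Stroke
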